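/- Let p be an odd prime and n ≥ 1. The hyperbolic-sine-type map φ : U_n → p^n ℤ_p, u ↦ u - u⁻¹, is a bijection from U_n = 1 + p^n ℤ_p onto p^n ℤ_p. -/

import Mathlib

/-!
On the principal units `‖u - 1‖ < 1` of an ultrametric field with `‖2‖ = 1`, the identity
`(u - u⁻¹) - (v - v⁻¹) = (u - v)(uv + 1)/(uv)` together with
`‖uv + 1‖ = ‖2 + (uv - 1)‖ = 1` shows that `φ u = u - u⁻¹` is an isometry with `φ 1 = 0`;
hence it is injective and maps `1 + p^n ℤ_p` into `p^n ℤ_p`. Surjectivity amounts to solving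
`u² - x u - 1 = 0` with `u ≡ 1`, which Hensel's lemma does, since `u = 1` is an approximate
root with unit derivative `2 - x`.
-/

open Polynomial

section Ultrametric

lemma norm_add_eq_left_of_norm_lt {E : Type*} [SeminormedAddCommGroup E] [IsUltrametricDist E]
    {x y : E} (h : ‖y‖ < ‖x‖) : ‖x + y‖ = ‖x‖ := by
  rw [IsUltrametricDist.norm_add_eq_max_of_norm_ne_norm h.ne', max_eq_left h.le]

variable {R : Type*} [NormedRing R] [IsUltrametricDist R]

lemma norm_eq_one_of_norm_sub_one_lt_one [NormOneClass R] {u : R} (hu : ‖u - 1‖ < 1) :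
    ‖u‖ = 1 := by
  have := norm_add_eq_left_of_norm_lt (x := (1 : R)) (y := u - 1) (by rwa [norm_one])
  rwa [add_sub_cancel, norm_one] at this

lemma norm_add_one_eq_one_of_norm_sub_one_lt_one (h2 : ‖(2 : R)‖ = 1) {u : R}
    (hu : ‖u - 1‖ < 1) : ‖u + 1‖ = 1 := by
  have : u + 1 = 2 + (u - 1) := by rw [← one_add_one_eq_two]; abel
  rw [this, norm_add_eq_left_of_norm_lt (h2 ▸ hu), h2]

lemma norm_mul_sub_one_lt_one [NormOneClass R] {u v : R} (hu : ‖u - 1‖ < 1)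
    (hv : ‖v - 1‖ < 1) : ‖u * v - 1‖ < 1 := by
  calc ‖u * v - 1‖ = ‖u * (v - 1) + (u - 1)‖ := by congr 1; noncomm_ring
    _ ≤ max ‖u * (v - 1)‖ ‖u - 1‖ := IsUltrametricDist.norm_add_le_max _ _
    _ ≤ max ‖v - 1‖ ‖u - 1‖ := by
      gcongr
      exact (norm_mul_le _ _).trans_eq (by rw [norm_eq_one_of_norm_sub_one_lt_one hu, one_mul])
    _ < 1 := max_lt hv hu

end Ultrametric

section UltrametricField

variable {K : Type*} [NormedField K] [IsUltrametricDist K]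

theorem norm_sub_inv_sub_sub_inv (h2 : ‖(2 : K)‖ = 1) {u v : K} (hu : ‖u - 1‖ < 1)
    (hv : ‖v - 1‖ < 1) : ‖(u - u⁻¹) - (v - v⁻¹)‖ = ‖u - v‖ := by
  have hu1 := norm_eq_one_of_norm_sub_one_lt_one hu
  have hv1 := norm_eq_one_of_norm_sub_one_lt_one hv
  have hu0 : u ≠ 0 := ne_zero_of_norm_ne_zero (hu1 ▸ one_ne_zero)
  have hv0 : v ≠ 0 := ne_zero_of_norm_ne_zero (hv1 ▸ one_ne_zero)
  have huv := norm_add_one_eq_one_of_norm_sub_one_lt_one h2 (norm_mul_sub_one_lt_one hu hv)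
  have key : (u - u⁻¹) - (v - v⁻¹) = (u - v) * (u * v + 1) * (u * v)⁻¹ := by
    field_simp
    ring
  rw [key, norm_mul, norm_mul, norm_inv, norm_mul, huv, hu1, hv1]
  simp

theorem norm_sub_inv (h2 : ‖(2 : K)‖ = 1) {u : K} (hu : ‖u - 1‖ < 1) :
    ‖u - u⁻¹‖ = ‖u - 1‖ := by
  simpa using norm_sub_inv_sub_sub_inv h2 hu (v := 1) (by simp)

end UltrametricField

namespace PadicInt

variable {p : ℕ} [Fact p.Prime]

lemma norm_two_eq_one (hp : p ≠ 2) : ‖(2 : ℤ_[p])‖ = 1 := by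
  exact_mod_cast norm_natCast_eq_one_iff.mpr
    ((Nat.coprime_primes Fact.out Nat.prime_two).mpr hp)

theorem exists_sq_sub_mul_sub_one_eq_zero (hp : p ≠ 2) {a : ℤ_[p]} (ha : ‖a‖ < 1) :
    ∃ z : ℤ_[p], z ^ 2 - a * z - 1 = 0 ∧ ‖z - 1‖ < 1 := by
  set F : ℤ_[p][X] := X ^ 2 - C a * X - 1
  have hF : F.eval 1 = -a := by simp [F]
  have hF' : ‖F.derivative.eval 1‖ = 1 := by
    have : F.derivative.eval 1 = 2 + -a := by simp [F]; ring
    rw [this, norm_add_eq_left_of_norm_lt (by rwa [norm_neg, norm_two_eq_one hp]),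
      norm_two_eq_one hp]
  have hnorm : ‖F.eval 1‖ < ‖F.derivative.eval 1‖ ^ 2 := by
    rwa [hF, hF', norm_neg, one_pow]
  obtain ⟨z, hz, hz1, -⟩ := hensels_lemma hnorm
  rw [coe_aeval_eq_eval] at hz hz1
  rw [hF'] at hz1
  exact ⟨z, by simpa [F] using hz, hz1⟩

end PadicInt

namespace Padic

variable {p : ℕ} [Fact p.Prime]

lemma norm_two_eq_one (hp : p ≠ 2) : ‖(2 : ℚ_[p])‖ = 1 := by
  exact_mod_cast norm_natCast_eq_one_iff.mpr
    ((Nat.coprime_primes Fact.out Nat.prime_two).mpr hp)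

theorem exists_sub_inv_eq (hp : p ≠ 2) {x : ℚ_[p]} (hx : ‖x‖ < 1) :
    ∃ u : ℚ_[p], ‖u - 1‖ < 1 ∧ u - u⁻¹ = x := by
  obtain ⟨z, hz, hz1⟩ :=
    PadicInt.exists_sq_sub_mul_sub_one_eq_zero hp (a := ⟨x, hx.le⟩) hx
  have hz1' : ‖(z : ℚ_[p]) - 1‖ < 1 := by rwa [← PadicInt.coe_one, ← PadicInt.coe_sub]
  have hz0 : (z : ℚ_[p]) ≠ 0 :=
    ne_zero_of_norm_ne_zero (by simp [norm_eq_one_of_norm_sub_one_lt_one hz1'])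
  have hzx : (z : ℚ_[p]) ^ 2 - x * z - 1 = 0 := by
    exact_mod_cast congrArg ((↑) : ℤ_[p] → ℚ_[p]) hz
  refine ⟨z, hz1', ?_⟩
  field_simp
  linear_combination hzx

theorem bijOn_sub_inv (hp : p ≠ 2) {r : ℝ} (hr : r < 1) :
    Set.BijOn (fun u : ℚ_[p] => u - u⁻¹) {u | ‖u - 1‖ ≤ r} {x | ‖x‖ ≤ r} := by
  have h2 := norm_two_eq_one hp
  refine ⟨fun u hu => ?_, fun u hu v hv huv => ?_, fun x hx => ?_⟩
  · simpa [norm_sub_inv h2 (hu.trans_lt hr)] using hu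
  · have := norm_sub_inv_sub_sub_inv h2 (hu.trans_lt hr) (hv.trans_lt hr)
    rwa [show u - u⁻¹ = v - v⁻¹ from huv, sub_self, norm_zero, eq_comm, norm_eq_zero,
      sub_eq_zero] at this
  · obtain ⟨u, hu, rfl⟩ := exists_sub_inv_eq hp (hx.trans_lt hr)
    exact ⟨u, by simpa [norm_sub_inv h2 hu] using hx, rfl⟩

end Padic

theorem padic_phi_bijective_on_principal_units (p : ℕ) [Fact p.Prime] (hp : p ≠ 2)
    (n : ℕ) (hn : 1 ≤ n) :
    Set.BijOn (fun u : ℚ_[p] => u - u⁻¹)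
      {u : ℚ_[p] | ‖u - 1‖ ≤ (p : ℝ) ^ (-(n : ℤ))}
      {x : ℚ_[p] | ‖x‖ ≤ (p : ℝ) ^ (-(n : ℤ))} := by
  refine Padic.bijOn_sub_inv hp ?_
  have hp1 : (1 : ℝ) < p := by exact_mod_cast (Fact.out : p.Prime).one_lt
  exact zpow_lt_one_of_neg₀ hp1 (by omega)
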